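/- arXiv:2507.22760 — 2 statements merged into one kernel-verified Lean document; each statement's English description precedes it below -/
import Mathlib

section
/- The unidirectional control envelope is not robust to output perturbations: for any T > 0, δ > 0, and Vmax ≥ 0, in the state p = 0 (which satisfies the invariant p ≥ 0), for every control choice v with 0 ≤ v ≤ Vmax and T·v ≤ p, there exists a perturbation ε with |ε| ≤ δ such that p − T·(v + ε) < 0. -/
theorem stmt_2 (T δ Vmax : ℝ) (hT : 0 < T) (hδ : 0 < δ) (hV : 0 ≤ Vmax) :
    ∀ v : ℝ, 0 ≤ v → v ≤ Vmax → T * v ≤ (0 : ℝ) →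
      ∃ ε : ℝ, |ε| ≤ δ ∧ (0 : ℝ) - T * (v + ε) < 0 := by
  intro v hv _ _
  exact ⟨δ, by rw [abs_of_pos hδ], by nlinarith⟩
end

section
/- The idealized NN controller f(p) = −100/(p + 10) + 9.5 is safe under perturbation for the two-wall robot: for all real p, ε_p, ε_v with 0 ≤ p ≤ 100, |ε_p| ≤ 1/4, |ε_v| ≤ 1/4, setting v = f(p + ε_p) + ε_v, we have −10 ≤ v ≤ 10 and 0 ≤ p − v ≤ 100. -/
theorem stmt_6 :
    ∀ p εp εv : ℝ, 0 ≤ p → p ≤ 100 → |εp| ≤ 1/4 → |εv| ≤ 1/4 →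
      -10 ≤ -100 / ((p + εp) + 10) + 9.5 + εv ∧
      -100 / ((p + εp) + 10) + 9.5 + εv ≤ 10 ∧
      0 ≤ p - (-100 / ((p + εp) + 10) + 9.5 + εv) ∧
      p - (-100 / ((p + εp) + 10) + 9.5 + εv) ≤ 100 := by
  intro p εp εv hp0 hp1 hεp hεv
  rw [abs_le] at hεp hεv
  obtain ⟨hεp1, hεp2⟩ := hεp
  obtain ⟨hεv1, hεv2⟩ := hεv
  have hq : (0:ℝ) < (p + εp) + 10 := by linarith
  have ht : -100 / ((p + εp) + 10) * ((p + εp) + 10) = -100 := by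
    field_simp
  refine ⟨?_, ?_, ?_, ?_⟩ <;>
    nlinarith [sq_nonneg (p + 0.25), sq_nonneg (p + εp), mul_pos hq hq,
      mul_pos hq (sub_pos.mpr hq), sq_nonneg ((p + εp) + 10), hq.le]
end
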